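/- arXiv:math/0506252 — 4 statements merged into one kernel-verified Lean document; each statement's English description precedes it below -/
import Mathlib

section
/- Let (M,μ) be a measure space, let p be a real number with 1 < p < 2, and let V, u : M → [0,∞] be measurable. Then ∫_M V u dμ ≤ (∫_M V^p dμ)^{1/2} · (∫_M V u² dμ)^{(2−p)/2} · (∫_M u² dμ)^{(p−1)/2}, where all integrals are taken in [0,∞]. -/
open MeasureTheory ENNReal

/-- The three-factor Hölder inequality: for `1 < p < 2` and measurable
`V, u : M → [0,∞]`,
`∫ V u ≤ (∫ V^p)^{1/2} (∫ V u²)^{(2-p)/2} (∫ u²)^{(p-1)/2}`. -/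
theorem three_factor_holder {M : Type*} [MeasurableSpace M] (μ : Measure M)
    (p : ℝ) (hp1 : 1 < p) (hp2 : p < 2)
    (V u : M → ℝ≥0∞) (hV : Measurable V) (hu : Measurable u) :
    ∫⁻ x, V x * u x ∂μ ≤
      (∫⁻ x, V x ^ p ∂μ) ^ ((1 : ℝ) / 2) *
      (∫⁻ x, V x * u x ^ (2 : ℝ) ∂μ) ^ ((2 - p) / 2) *
      (∫⁻ x, u x ^ (2 : ℝ) ∂μ) ^ ((p - 1) / 2) := by
  have h2p : (0:ℝ) < 2 - p := by linarith
  have hp1' : (0:ℝ) < p - 1 := by linarith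
  -- Step 1: Cauchy-Schwarz
  have conj2 : (2:ℝ).HolderConjugate 2 := by
    rw [Real.holderConjugate_iff]; constructor <;> norm_num
  have step1 : ∫⁻ x, V x * u x ∂μ ≤
      (∫⁻ x, (V x ^ (p/2)) ^ (2:ℝ) ∂μ) ^ ((1:ℝ)/2) *
      (∫⁻ x, (V x ^ (1 - p/2) * u x) ^ (2:ℝ) ∂μ) ^ ((1:ℝ)/2) := by
    have := ENNReal.lintegral_mul_le_Lp_mul_Lq μ conj2
      (f := fun x => V x ^ (p/2)) (g := fun x => V x ^ (1 - p/2) * u x)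
      ((hV.pow_const _).aemeasurable) (((hV.pow_const _).mul hu).aemeasurable)
    refine le_trans (le_of_eq ?_) this
    refine lintegral_congr fun x => ?_
    simp only [Pi.mul_apply]
    rw [← mul_assoc, ← ENNReal.rpow_add_of_nonneg _ _ (by linarith) (by linarith)]
    norm_num
  have e1 : ∀ x, (V x ^ (p/2)) ^ (2:ℝ) = V x ^ p := by
    intro x; rw [← ENNReal.rpow_mul]; norm_num
  have e2 : ∀ x, (V x ^ (1 - p/2) * u x) ^ (2:ℝ) =
      (V x * u x ^ (2:ℝ)) ^ (2 - p) * (u x ^ (2:ℝ)) ^ (p - 1) := by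
    intro x
    rw [ENNReal.mul_rpow_of_nonneg _ _ (by norm_num),
      ENNReal.mul_rpow_of_nonneg _ _ h2p.le, ← ENNReal.rpow_mul, ← ENNReal.rpow_mul,
      ← ENNReal.rpow_mul, mul_assoc,
      ← ENNReal.rpow_add_of_nonneg _ _ (by linarith) (by linarith)]
    rw [show (2:ℝ)*(2-p) + 2*(p-1) = 2 by ring, show (1-p/2)*2 = 2-p by ring]
  -- Step 2: Hölder with exponents 1/(2-p), 1/(p-1)
  have conjpq : (1/(2-p)).HolderConjugate (1/(p-1)) := by
    rw [Real.holderConjugate_iff]; constructor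
    · rw [lt_div_iff₀ h2p]; linarith
    · rw [one_div, one_div, inv_inv, inv_inv]; ring
  have step2 : ∫⁻ x, (V x * u x ^ (2:ℝ)) ^ (2 - p) * (u x ^ (2:ℝ)) ^ (p - 1) ∂μ ≤
      (∫⁻ x, V x * u x ^ (2:ℝ) ∂μ) ^ (2 - p) * (∫⁻ x, u x ^ (2:ℝ) ∂μ) ^ (p - 1) := by
    have := ENNReal.lintegral_mul_le_Lp_mul_Lq μ conjpq
      (f := fun x => (V x * u x ^ (2:ℝ)) ^ (2 - p)) (g := fun x => (u x ^ (2:ℝ)) ^ (p - 1))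
      (((hV.mul (hu.pow_const _)).pow_const _).aemeasurable)
      (((hu.pow_const _).pow_const _).aemeasurable)
    refine le_trans this (le_of_eq ?_)
    rw [one_div_one_div, one_div_one_div]
    congr 1 <;> refine congrArg₂ _ (lintegral_congr fun x => ?_) rfl
    · rw [← ENNReal.rpow_mul, mul_one_div, div_self h2p.ne', ENNReal.rpow_one]
    · rw [← ENNReal.rpow_mul, mul_one_div, div_self hp1'.ne', ENNReal.rpow_one]
  calc ∫⁻ x, V x * u x ∂μ
      ≤ (∫⁻ x, V x ^ p ∂μ) ^ ((1:ℝ)/2) *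
        (∫⁻ x, (V x * u x ^ (2:ℝ)) ^ (2 - p) * (u x ^ (2:ℝ)) ^ (p - 1) ∂μ) ^ ((1:ℝ)/2) := by
        refine le_of_le_of_eq step1 ?_
        congr 1
        · exact congrArg₂ _ (lintegral_congr e1) rfl
        · exact congrArg₂ _ (lintegral_congr e2) rfl
    _ ≤ (∫⁻ x, V x ^ p ∂μ) ^ ((1:ℝ)/2) *
        ((∫⁻ x, V x * u x ^ (2:ℝ) ∂μ) ^ (2 - p) * (∫⁻ x, u x ^ (2:ℝ) ∂μ) ^ (p - 1)) ^ ((1:ℝ)/2) := by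
        gcongr
    _ = _ := by
        rw [ENNReal.mul_rpow_of_nonneg _ _ (by norm_num : (0:ℝ) ≤ 1/2),
          ← ENNReal.rpow_mul, ← ENNReal.rpow_mul, mul_assoc]
        congr 2 <;> ring
end

section
/- Let (X,d,μ) be a metric measure space with 0 < μ(B(x,r)) < ∞ for all x, r, satisfying: (i) the doubling bound μ(B(x,s)) ≤ C_D (s/r)^ν μ(B(x,r)) for all x ∈ X and 0 < r ≤ s, for some C_D ≥ 1, ν > 0; (ii) the reverse doubling bound μ(B(x,s)) ≥ c₀ (s/r)^β μ(B(x,r)) for all x ∈ X and 0 < r ≤ s, for some c₀ > 0 and β > 1. Let p : (0,∞) × X × X → [0,∞) be measurable and satisfy p_t(x,y) ≤ C e^{−c·d(x,y)²/t} / μ(B(x,√t)) for all t > 0 and x, y ∈ X, for some C, c > 0. Then there exists C′ > 0, depending only on C_D, ν, c₀, β, C, c, such that for all x ≠ y, ∫₀^∞ t^{−1/2} p_t(x,y) dt ≤ C′ · d(x,y) / μ(B(x, d(x,y))). -/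
open MeasureTheory

lemma aux_rpow_mul_exp_le (a : ℝ) (ha : 0 ≤ a) (u : ℝ) (hu : 0 < u) :
    u ^ a * Real.exp (-u) ≤ Nat.factorial (Nat.ceil a) + 1 := by
  have hfac : (1 : ℝ) ≤ (Nat.factorial (Nat.ceil a) : ℝ) := by
    exact_mod_cast Nat.one_le_iff_ne_zero.2 (Nat.factorial_ne_zero _)
  rcases le_total u 1 with h1 | h1
  · have h2 : u ^ a ≤ 1 := Real.rpow_le_one hu.le h1 ha
    have h3 : Real.exp (-u) ≤ 1 := Real.exp_le_one_iff.2 (by linarith)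
    have h4 : 0 ≤ u ^ a := Real.rpow_nonneg hu.le a
    nlinarith [Real.exp_pos (-u)]
  · have h3 : u ^ a ≤ u ^ ((Nat.ceil a : ℕ) : ℝ) :=
      Real.rpow_le_rpow_of_exponent_le h1 (Nat.le_ceil a)
    rw [Real.rpow_natCast] at h3
    have h4 : u ^ (Nat.ceil a) / Nat.factorial (Nat.ceil a) ≤ Real.exp u :=
      Real.pow_div_factorial_le_exp (x := u) (by linarith) _
    have h5 : u ^ (Nat.ceil a) ≤ Nat.factorial (Nat.ceil a) * Real.exp u := by
      rw [div_le_iff₀ (by positivity)] at h4; linarith [h4]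
    have h6 : u ^ a * Real.exp (-u) ≤ (Nat.factorial (Nat.ceil a) * Real.exp u) * Real.exp (-u) := by
      have := Real.exp_pos (-u)
      nlinarith
    rw [mul_assoc, ← Real.exp_add] at h6
    simp at h6
    linarith

set_option maxHeartbeats 1000000 in
/-- Under doubling (exponent ν) and reverse doubling (exponent β > 1), a Gaussian
upper bound on a kernel `p_t` yields the Riesz-type estimate
`∫₀^∞ t^{-1/2} p_t(x,y) dt ≤ C' d(x,y)/μ(B(x,d(x,y)))` for `x ≠ y`. -/
theorem inverse_sqrt_laplacian_kernel_bound
    {X : Type*} [MetricSpace X] [MeasurableSpace X] [OpensMeasurableSpace X]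
    (μ : Measure X)
    (C_D ν c₀ β C c : ℝ) (hCD : 1 ≤ C_D) (hν : 0 < ν) (hc₀ : 0 < c₀) (hβ : 1 < β)
    (hC : 0 < C) (hc : 0 < c)
    (hball : ∀ (x : X) (r : ℝ), 0 < r →
      0 < μ (Metric.ball x r) ∧ μ (Metric.ball x r) < ⊤)
    (hdoub : ∀ (x : X) (r s : ℝ), 0 < r → r ≤ s →
      (μ (Metric.ball x s)).toReal ≤ C_D * (s / r) ^ ν * (μ (Metric.ball x r)).toReal)
    (hrev : ∀ (x : X) (r s : ℝ), 0 < r → r ≤ s →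
      c₀ * (s / r) ^ β * (μ (Metric.ball x r)).toReal ≤ (μ (Metric.ball x s)).toReal)
    (p : ℝ → X → X → ℝ)
    (hpmeas : Measurable fun q : ℝ × X × X => p q.1 q.2.1 q.2.2)
    (hp0 : ∀ (t : ℝ) (x y : X), 0 < t → 0 ≤ p t x y)
    (hpbound : ∀ (t : ℝ) (x y : X), 0 < t →
      p t x y ≤ C * Real.exp (-c * dist x y ^ 2 / t) /
        (μ (Metric.ball x (Real.sqrt t))).toReal) :
    ∃ C' : ℝ, 0 < C' ∧ ∀ x y : X, x ≠ y →
      ∫⁻ t in Set.Ioi (0 : ℝ), ENNReal.ofReal (t ^ (-(1 : ℝ) / 2) * p t x y) ≤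
        ENNReal.ofReal (C' * dist x y / (μ (Metric.ball x (dist x y))).toReal) := by
  set a : ℝ := (ν + 1) / 2 with ha_def
  have ha : 0 ≤ a := by rw [ha_def]; positivity
  set K : ℝ := Nat.factorial (Nat.ceil a) + 1 with hK_def
  have hKpos : 0 < K := by
    have : (0:ℝ) < Nat.factorial (Nat.ceil a) := by exact_mod_cast Nat.factorial_pos _
    rw [hK_def]; linarith
  have hcna : 0 < c ^ (-a) := Real.rpow_pos_of_pos hc _
  have hb1 : (0:ℝ) < β - 1 := by linarith
  set M₁ : ℝ := C * C_D * (c ^ (-a) * K) with hM₁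
  set M₂ : ℝ := C / c₀ * (2 / (β - 1)) with hM₂
  have hM₁pos : 0 < M₁ := by rw [hM₁]; positivity
  have hM₂pos : 0 < M₂ := by rw [hM₂]; positivity
  refine ⟨M₁ + M₂, by positivity, fun x y hxy => ?_⟩
  set d := dist x y with hd_def
  have hd : 0 < d := dist_pos.2 hxy
  have hd2 : (0:ℝ) < d ^ 2 := by positivity
  set V := (μ (Metric.ball x d)).toReal with hV_def
  have hVpos : 0 < V := ENNReal.toReal_pos (hball x d hd).1.ne' (hball x d hd).2.ne
  -- split the integral
  rw [← Set.Ioc_union_Ioi_eq_Ioi hd2.le,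
    lintegral_union measurableSet_Ioi (Set.Ioc_disjoint_Ioi le_rfl)]
  -- piece 1 pointwise bound
  have key1 : ∀ t ∈ Set.Ioc (0:ℝ) (d^2),
      ENNReal.ofReal (t ^ (-(1:ℝ)/2) * p t x y) ≤ ENNReal.ofReal (M₁ / (d * V)) := by
    rintro t ⟨ht0, ht1⟩
    apply ENNReal.ofReal_le_ofReal
    have hst : 0 < Real.sqrt t := Real.sqrt_pos.2 ht0
    have hstd : Real.sqrt t ≤ d := by
      calc Real.sqrt t ≤ Real.sqrt (d^2) := Real.sqrt_le_sqrt ht1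
        _ = d := Real.sqrt_sq hd.le
    set W := (μ (Metric.ball x (Real.sqrt t))).toReal with hW_def
    have hWpos : 0 < W := ENNReal.toReal_pos (hball x _ hst).1.ne' (hball x _ hst).2.ne
    have hdb : V ≤ C_D * (d / Real.sqrt t) ^ ν * W := hdoub x _ d hst hstd
    have hp : p t x y ≤ C * Real.exp (-c * d ^ 2 / t) / W := hpbound t x y ht0
    set u : ℝ := c * d ^ 2 / t with hu_def
    have hu : 0 < u := by rw [hu_def]; exact div_pos (mul_pos hc hd2) ht0
    have hexp : (-c * d^2 / t) = -u := by rw [hu_def]; ring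
    have hKb : u ^ a * Real.exp (-u) ≤ K := by
      rw [hK_def]; exact aux_rpow_mul_exp_le a ha u hu
    have htpos : 0 < t ^ (-(1:ℝ)/2) := Real.rpow_pos_of_pos ht0 _
    have hRpos : 0 < (d / Real.sqrt t) ^ ν := Real.rpow_pos_of_pos (div_pos hd hst) _
    -- identities
    have l1 : t ^ (-(1:ℝ)/2) * (d / Real.sqrt t) ^ ν = d ^ ν * t ^ (-a) := by
      rw [Real.sqrt_eq_rpow, Real.div_rpow hd.le (Real.rpow_nonneg ht0.le _),
        ← Real.rpow_mul ht0.le]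
      have h2 : -(1:ℝ)/2 - 1/2*ν = -a := by rw [ha_def]; ring
      calc t ^ (-(1:ℝ)/2) * (d ^ ν / t ^ (1/2*ν))
          = d ^ ν * (t ^ (-(1:ℝ)/2) / t ^ (1/2*ν)) := by ring
        _ = d ^ ν * t ^ (-(1:ℝ)/2 - 1/2*ν) := by rw [← Real.rpow_sub ht0]
        _ = d ^ ν * t ^ (-a) := by rw [h2]
    have l2 : c ^ (-a) / d * u ^ a = d ^ ν * t ^ (-a) := by
      rw [hu_def, div_eq_mul_inv (c * d^2),
        Real.mul_rpow (by positivity) (inv_nonneg.2 ht0.le),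
        Real.mul_rpow hc.le (sq_nonneg d),
        Real.inv_rpow ht0.le, ← Real.rpow_neg ht0.le,
        ← Real.rpow_natCast d 2, ← Real.rpow_mul hd.le]
      have h3 : ((2:ℕ):ℝ) * a = ν + 1 := by rw [ha_def]; push_cast; ring
      rw [h3]
      have hc1 : c ^ (-a) * c ^ a = 1 := by
        rw [← Real.rpow_add hc]; simp
      have hd1 : d ^ (ν+1) = d ^ ν * d := by rw [Real.rpow_add hd, Real.rpow_one]
      rw [hd1]
      field_simp
      exact hc1
    -- core estimate
    have hcore : t ^ (-(1:ℝ)/2) * ((d / Real.sqrt t) ^ ν * Real.exp (-c * d^2 / t))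
        ≤ c ^ (-a) * K / d := by
      rw [hexp]
      calc t ^ (-(1:ℝ)/2) * ((d / Real.sqrt t) ^ ν * Real.exp (-u))
          = c ^ (-a) / d * (u ^ a * Real.exp (-u)) := by
            rw [← mul_assoc, l1, ← l2]; ring
        _ ≤ c ^ (-a) / d * K := by
            apply mul_le_mul_of_nonneg_left hKb (by positivity)
        _ = c ^ (-a) * K / d := by ring
    -- combine
    have step2 : C * Real.exp (-c * d^2 / t) / W
        ≤ C * Real.exp (-c * d^2 / t) * (C_D * (d / Real.sqrt t) ^ ν) / V := by
      rw [div_le_div_iff₀ hWpos hVpos]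
      have hA : 0 ≤ C * Real.exp (-c * d^2 / t) := by positivity
      nlinarith [mul_le_mul_of_nonneg_left hdb hA]
    calc t ^ (-(1:ℝ)/2) * p t x y
        ≤ t ^ (-(1:ℝ)/2) * (C * Real.exp (-c * d^2 / t) / W) :=
          mul_le_mul_of_nonneg_left hp htpos.le
      _ ≤ t ^ (-(1:ℝ)/2) * (C * Real.exp (-c * d^2 / t) * (C_D * (d / Real.sqrt t) ^ ν) / V) :=
          mul_le_mul_of_nonneg_left step2 htpos.le
      _ = C * C_D / V * (t ^ (-(1:ℝ)/2) * ((d / Real.sqrt t) ^ ν * Real.exp (-c * d^2 / t))) := by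
          ring
      _ ≤ C * C_D / V * (c ^ (-a) * K / d) :=
          mul_le_mul_of_nonneg_left hcore (by positivity)
      _ = M₁ / (d * V) := by rw [hM₁]; field_simp [hd.ne', hVpos.ne']
  -- piece 2 pointwise bound
  set s : ℝ := -(1 + β) / 2 with hs_def
  have hs : s < -1 := by rw [hs_def]; linarith
  have key2 : ∀ t ∈ Set.Ioi (d^2),
      ENNReal.ofReal (t ^ (-(1:ℝ)/2) * p t x y)
        ≤ ENNReal.ofReal (C / c₀ * d ^ β / V) * ENNReal.ofReal (t ^ s) := by
    intro t ht
    rw [Set.mem_Ioi] at ht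
    have ht0 : (0:ℝ) < t := hd2.trans ht
    rw [← ENNReal.ofReal_mul (by positivity)]
    apply ENNReal.ofReal_le_ofReal
    have hst : 0 < Real.sqrt t := Real.sqrt_pos.2 ht0
    have hdst : d ≤ Real.sqrt t := by
      calc d = Real.sqrt (d^2) := (Real.sqrt_sq hd.le).symm
        _ ≤ Real.sqrt t := Real.sqrt_le_sqrt ht.le
    set W := (μ (Metric.ball x (Real.sqrt t))).toReal with hW_def
    have hWpos : 0 < W := ENNReal.toReal_pos (hball x _ hst).1.ne' (hball x _ hst).2.ne
    have hRpos : 0 < (Real.sqrt t / d) ^ β := Real.rpow_pos_of_pos (div_pos hst hd) _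
    have hrv : c₀ * (Real.sqrt t / d) ^ β * V ≤ W := hrev x d _ hd hdst
    have hexle : Real.exp (-c * d ^ 2 / t) ≤ 1 := by
      rw [Real.exp_le_one_iff]
      apply div_nonpos_of_nonpos_of_nonneg _ ht0.le
      nlinarith
    have hp1 : p t x y ≤ C / W := by
      refine (hpbound t x y ht0).trans ?_
      rw [div_le_div_iff₀ hWpos hWpos]
      nlinarith [mul_le_mul_of_nonneg_left hexle (mul_pos hC hWpos).le]
    have hp2 : C / W ≤ C / (c₀ * (Real.sqrt t / d) ^ β * V) :=
      div_le_div_of_nonneg_left hC.le (mul_pos (mul_pos hc₀ hRpos) hVpos) hrv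
    have htpos : 0 < t ^ (-(1:ℝ)/2) := Real.rpow_pos_of_pos ht0 _
    have l3 : (Real.sqrt t / d) ^ β = t ^ (β/2) / d ^ β := by
      rw [Real.sqrt_eq_rpow, Real.div_rpow (Real.rpow_nonneg ht0.le _) hd.le,
        ← Real.rpow_mul ht0.le, show (1/2 : ℝ) * β = β / 2 by ring]
    have l4 : t ^ (-(1:ℝ)/2) / t ^ (β/2) = t ^ s := by
      rw [← Real.rpow_sub ht0]
      congr 1
      rw [hs_def]; ring
    calc t ^ (-(1:ℝ)/2) * p t x y
        ≤ t ^ (-(1:ℝ)/2) * (C / (c₀ * (Real.sqrt t / d) ^ β * V)) :=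
          mul_le_mul_of_nonneg_left (hp1.trans hp2) htpos.le
      _ = C / c₀ * d ^ β / V * t ^ s := by
          rw [l3, ← l4]
          have hdβ : (0:ℝ) < d ^ β := Real.rpow_pos_of_pos hd _
          have htβ : (0:ℝ) < t ^ (β/2) := Real.rpow_pos_of_pos ht0 _
          field_simp
  -- evaluating the two integrals
  have int1 : ∫⁻ t in Set.Ioc (0:ℝ) (d^2), ENNReal.ofReal (t ^ (-(1:ℝ)/2) * p t x y)
      ≤ ENNReal.ofReal (M₁ * d / V) := by
    calc ∫⁻ t in Set.Ioc (0:ℝ) (d^2), ENNReal.ofReal (t ^ (-(1:ℝ)/2) * p t x y)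
        ≤ ∫⁻ _ in Set.Ioc (0:ℝ) (d^2), ENNReal.ofReal (M₁ / (d * V)) :=
          setLIntegral_mono' measurableSet_Ioc key1
      _ = ENNReal.ofReal (M₁ / (d * V)) * ENNReal.ofReal (d^2 - 0) := by
          rw [setLIntegral_const, Real.volume_Ioc]
      _ = ENNReal.ofReal (M₁ / (d * V) * (d^2 - 0)) := by
          rw [← ENNReal.ofReal_mul (by positivity)]
      _ = ENNReal.ofReal (M₁ * d / V) := by
          congr 1
          field_simp [hd.ne', hVpos.ne']
          ring
  have int2 : ∫⁻ t in Set.Ioi (d^2), ENNReal.ofReal (t ^ (-(1:ℝ)/2) * p t x y)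
      ≤ ENNReal.ofReal (M₂ * d / V) := by
    calc ∫⁻ t in Set.Ioi (d^2), ENNReal.ofReal (t ^ (-(1:ℝ)/2) * p t x y)
        ≤ ∫⁻ t in Set.Ioi (d^2), ENNReal.ofReal (C / c₀ * d ^ β / V) * ENNReal.ofReal (t ^ s) :=
          setLIntegral_mono' measurableSet_Ioi key2
      _ = ENNReal.ofReal (C / c₀ * d ^ β / V) * ∫⁻ t in Set.Ioi (d^2), ENNReal.ofReal (t ^ s) :=
          lintegral_const_mul' _ _ ENNReal.ofReal_ne_top
      _ = ENNReal.ofReal (C / c₀ * d ^ β / V) * ENNReal.ofReal (∫ t in Set.Ioi (d^2), t ^ s) := by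
          rw [← ofReal_integral_eq_lintegral_ofReal (integrableOn_Ioi_rpow_of_lt hs hd2)]
          exact (ae_restrict_of_forall_mem measurableSet_Ioi fun t ht =>
            Real.rpow_nonneg (hd2.trans ht).le s)
      _ = ENNReal.ofReal (M₂ * d / V) := by
          rw [integral_Ioi_rpow_of_lt hs hd2, ← ENNReal.ofReal_mul (by positivity)]
          congr 1
          have hsum : s + 1 = (1 - β)/2 := by rw [hs_def]; ring
          have hdd : ((d^2 : ℝ)) ^ (s+1) = d ^ (1 - β) := by
            rw [← Real.rpow_natCast d 2, ← Real.rpow_mul hd.le, hsum,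
              show ((2:ℕ):ℝ) * ((1-β)/2) = 1-β by push_cast; ring]
          have hdb2 : d ^ β * d ^ (1-β) = d := by
            rw [← Real.rpow_add hd]; norm_num
          rw [hdd, hsum, hM₂]
          have h1β : (1:ℝ) - β ≠ 0 := by intro h; nlinarith
          rw [show -(d ^ ((1:ℝ)-β)) / (((1:ℝ)-β)/2) = d ^ ((1:ℝ)-β) * (2/(β-1)) by
            field_simp; ring]
          calc C / c₀ * d ^ β / V * (d ^ ((1:ℝ)-β) * (2/(β-1)))
              = C / c₀ * (2/(β-1)) * (d ^ β * d ^ ((1:ℝ)-β)) / V := by ring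
            _ = C / c₀ * (2/(β-1)) * d / V := by rw [hdb2]
  calc (∫⁻ t in Set.Ioc (0:ℝ) (d^2), ENNReal.ofReal (t ^ (-(1:ℝ)/2) * p t x y)) +
        ∫⁻ t in Set.Ioi (d^2), ENNReal.ofReal (t ^ (-(1:ℝ)/2) * p t x y)
      ≤ ENNReal.ofReal (M₁ * d / V) + ENNReal.ofReal (M₂ * d / V) := add_le_add int1 int2
    _ = ENNReal.ofReal ((M₁ + M₂) * d / V) := by
        rw [← ENNReal.ofReal_add (by positivity) (by positivity)]
        congr 1
        ring
end

section
/- Let p ≥ 2 and C, K ≥ 0, and let φ : [1,∞) → [0,∞) be continuous and satisfy φ(t) ≤ C + K ∫₁^t s^{−1/p} φ(s)^{1−2/p} ds for all t ≥ 1. Then there exists a constant C′, depending only on p, C, K, such that φ(t) ≤ C′ t^{(p−1)/2} for all t ≥ 1. -/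
open MeasureTheory

/-- Nonlinear Gronwall lemma: if `φ : [1,∞) → [0,∞)` is continuous and
`φ(t) ≤ C + K ∫₁^t s^{-1/p} φ(s)^{1-2/p} ds` for all `t ≥ 1` (with `p ≥ 2`),
then `φ(t) ≤ C' t^{(p-1)/2}` for a constant `C'` depending only on `p, C, K`. -/
theorem gronwall_power_decay (p C K : ℝ) (hp : 2 ≤ p) (hC : 0 ≤ C) (hK : 0 ≤ K) :
    ∃ C' : ℝ, ∀ φ : ℝ → ℝ, ContinuousOn φ (Set.Ici 1) →
      (∀ t ∈ Set.Ici (1 : ℝ), 0 ≤ φ t) →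
      (∀ t ∈ Set.Ici (1 : ℝ),
        φ t ≤ C + K * ∫ s in (1 : ℝ)..t, s ^ (-(1 : ℝ) / p) * φ s ^ (1 - 2 / p)) →
      ∀ t ∈ Set.Ici (1 : ℝ), φ t ≤ C' * t ^ ((p - 1) / 2) := by
  have hp0 : (0:ℝ) < p := by linarith
  have hp1 : (1:ℝ) ≤ p - 1 := by linarith
  set α : ℝ := 1 - 2 / p with hαdef
  set β : ℝ := (p - 1) / 2 with hβdef
  have hα0 : 0 ≤ α := by
    have h2p : 2 / p ≤ 1 := by rw [div_le_one hp0]; linarith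
    simp only [hαdef]; linarith
  have hβ0 : (0:ℝ) < β := by rw [hβdef]; positivity
  set D : ℝ := C + 2 * K / (p - 1) + 1 with hDdef
  have hD1 : (1:ℝ) ≤ D := by
    have : 0 ≤ 2 * K / (p - 1) := by positivity
    simp only [hDdef]; linarith
  have hD0 : (0:ℝ) < D := lt_of_lt_of_le one_pos hD1
  set C' : ℝ := D ^ (p / 2) with hC'def
  have hC'1 : (1:ℝ) ≤ C' := Real.one_le_rpow hD1 (by positivity)
  have hC'0 : (0:ℝ) < C' := lt_of_lt_of_le one_pos hC'1
  refine ⟨C', ?_⟩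
  intro φ hφc hφ0 hint
  -- key estimate
  have key : ∀ t₀ : ℝ, 1 ≤ t₀ → (∀ s ∈ Set.Ico (1:ℝ) t₀, φ s ≤ C' * s ^ β) →
      φ t₀ ≤ (C' - 1) * t₀ ^ β := by
    intro t₀ ht₀ hbd
    have huIcc : Set.uIcc (1:ℝ) t₀ = Set.Icc 1 t₀ := Set.uIcc_of_le ht₀
    have hsub : Set.Icc (1:ℝ) t₀ ⊆ Set.Ici 1 := fun x hx => hx.1
    have hpos : ∀ x ∈ Set.Icc (1:ℝ) t₀, (0:ℝ) < x := fun x hx => lt_of_lt_of_le one_pos hx.1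
    have hInt1 : IntervalIntegrable (fun s => s ^ (-(1:ℝ) / p) * φ s ^ α) volume 1 t₀ := by
      apply ContinuousOn.intervalIntegrable
      rw [huIcc]
      exact (continuousOn_id.rpow_const fun x hx => Or.inl (ne_of_gt (hpos x hx))).mul
        ((hφc.mono hsub).rpow_const fun x hx => Or.inr hα0)
    have hInt2 : IntervalIntegrable (fun s => C' ^ α * s ^ ((p - 3) / 2)) volume 1 t₀ := by
      apply ContinuousOn.intervalIntegrable
      rw [huIcc]
      exact continuousOn_const.mul
        (continuousOn_id.rpow_const fun x hx => Or.inl (ne_of_gt (hpos x hx)))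
    have hmono : ∫ s in (1:ℝ)..t₀, s ^ (-(1:ℝ) / p) * φ s ^ α
        ≤ ∫ s in (1:ℝ)..t₀, C' ^ α * s ^ ((p - 3) / 2) := by
      apply intervalIntegral.integral_mono_ae_restrict ht₀ hInt1 hInt2
      rw [← Measure.restrict_congr_set Ico_ae_eq_Icc]
      refine (MeasureTheory.ae_restrict_iff' measurableSet_Ico).2
        (Filter.Eventually.of_forall fun s hs => ?_)
      obtain ⟨hs1, hs2⟩ := hs
      have hs0 : (0:ℝ) < s := lt_of_lt_of_le one_pos hs1
      have h1 : φ s ^ α ≤ (C' * s ^ β) ^ α :=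
        Real.rpow_le_rpow (hφ0 s hs1) (hbd s ⟨hs1, hs2⟩) hα0
      have h2 : (C' * s ^ β) ^ α = C' ^ α * s ^ (β * α) := by
        rw [Real.mul_rpow hC'0.le (Real.rpow_nonneg hs0.le _), ← Real.rpow_mul hs0.le]
      have h3 : s ^ (-(1:ℝ) / p) * (C' ^ α * s ^ (β * α)) = C' ^ α * s ^ ((p - 3) / 2) := by
        rw [mul_left_comm, ← Real.rpow_add hs0]
        congr 2
        field_simp [hβdef, hαdef]
        have hp2 : p * (2 / p) = 2 := by field_simp
        rw [hβdef, hαdef]; linear_combination (1 - p) * hp2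
      calc s ^ (-(1:ℝ) / p) * φ s ^ α
          ≤ s ^ (-(1:ℝ) / p) * (C' * s ^ β) ^ α := by
            apply mul_le_mul_of_nonneg_left h1 (Real.rpow_nonneg hs0.le _)
        _ = C' ^ α * s ^ ((p - 3) / 2) := by rw [h2, h3]
    have hval : ∫ s in (1:ℝ)..t₀, C' ^ α * s ^ ((p - 3) / 2)
        = C' ^ α * ((t₀ ^ β - 1) / β) := by
      rw [intervalIntegral.integral_const_mul, integral_rpow (Or.inl (by linarith))]
      have : (p - 3) / 2 + 1 = β := by rw [hβdef]; ring
      rw [this, Real.one_rpow]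
    have ht₀β1 : (1:ℝ) ≤ t₀ ^ β := Real.one_le_rpow ht₀ hβ0.le
    have hCα : C' ^ α = D ^ ((p - 2) / 2) := by
      rw [hC'def, ← Real.rpow_mul hD0.le]
      congr 1
      field_simp [hαdef]
      have hp2 : p * (2 / p) = 2 := by field_simp
      rw [hαdef]; linear_combination (-1:ℝ) * hp2
    have hE1 : (1:ℝ) ≤ D ^ ((p - 2) / 2) := Real.one_le_rpow hD1 (by linarith)
    have hDE : D * D ^ ((p - 2) / 2) = C' := by
      rw [hC'def, ← Real.rpow_one_add' hD0.le (by intro h; linarith [hβ0])]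
      congr 1
      ring
    -- combine
    have step1 : φ t₀ ≤ C + K * (C' ^ α * ((t₀ ^ β - 1) / β)) := by
      calc φ t₀ ≤ C + K * ∫ s in (1:ℝ)..t₀, s ^ (-(1:ℝ) / p) * φ s ^ α := hint t₀ ht₀
        _ ≤ C + K * (C' ^ α * ((t₀ ^ β - 1) / β)) := by
            rw [← hval]; exact add_le_add_right (mul_le_mul_of_nonneg_left hmono hK) C
    have step2 : K * (C' ^ α * ((t₀ ^ β - 1) / β)) ≤ (2 * K / (p - 1)) * C' ^ α * t₀ ^ β := by
      have hb : (t₀ ^ β - 1) / β ≤ t₀ ^ β / β := by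
        gcongr
        linarith
      have hCα0 : (0:ℝ) ≤ C' ^ α := Real.rpow_nonneg hC'0.le _
      calc K * (C' ^ α * ((t₀ ^ β - 1) / β)) ≤ K * (C' ^ α * (t₀ ^ β / β)) := by
            apply mul_le_mul_of_nonneg_left (mul_le_mul_of_nonneg_left hb hCα0) hK
        _ = (2 * K / (p - 1)) * C' ^ α * t₀ ^ β := by
            rw [hβdef]; field_simp
    have step3 : C + (2 * K / (p - 1)) * C' ^ α * t₀ ^ β ≤ (C' - 1) * t₀ ^ β := by
      have hKp : (0:ℝ) ≤ 2 * K / (p - 1) := by positivity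
      have hfinal : C + (2 * K / (p - 1)) * C' ^ α ≤ C' - 1 := by
        rw [hCα]
        have h1 : C + (2 * K / (p - 1)) * D ^ ((p - 2) / 2)
            ≤ (C + 2 * K / (p - 1)) * D ^ ((p - 2) / 2) := by
          nlinarith [hE1]
        have h2 : (C + 2 * K / (p - 1)) * D ^ ((p - 2) / 2) = C' - D ^ ((p - 2) / 2) := by
          have : C + 2 * K / (p - 1) = D - 1 := by rw [hDdef]; ring
          rw [this, sub_mul, one_mul, hDE]
        linarith
      have hC'α0 : (0:ℝ) ≤ (2 * K / (p - 1)) * C' ^ α := by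
        exact mul_nonneg hKp (Real.rpow_nonneg hC'0.le _)
      nlinarith [ht₀β1]
    calc φ t₀ ≤ C + K * (C' ^ α * ((t₀ ^ β - 1) / β)) := step1
      _ ≤ C + (2 * K / (p - 1)) * C' ^ α * t₀ ^ β := by linarith [step2]
      _ ≤ (C' - 1) * t₀ ^ β := step3
  -- contradiction argument
  by_contra hcon
  push_neg at hcon
  obtain ⟨t, ht1, hlt⟩ := hcon
  set B : Set ℝ := {t : ℝ | 1 ≤ t ∧ C' * t ^ β < φ t} with hBdef
  have hBne : B.Nonempty := ⟨t, ht1, hlt⟩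
  have hBbd : BddBelow B := ⟨1, fun x hx => hx.1⟩
  set t₀ : ℝ := sInf B with ht₀def
  have ht₀1 : 1 ≤ t₀ := le_csInf hBne fun x hx => hx.1
  have hbelow : ∀ s ∈ Set.Ico (1:ℝ) t₀, φ s ≤ C' * s ^ β := by
    intro s ⟨hs1, hs2⟩
    by_contra h'
    push_neg at h'
    exact absurd (csInf_le hBbd ⟨hs1, h'⟩) (not_le.mpr hs2)
  have hup := key t₀ ht₀1 hbelow
  have ht₀βpos : (0:ℝ) < t₀ ^ β := Real.rpow_pos_of_pos (lt_of_lt_of_le one_pos ht₀1) β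
  have hstrict : φ t₀ < C' * t₀ ^ β := by nlinarith
  obtain ⟨u, -, hu_tendsto, hu_mem⟩ := exists_seq_tendsto_sInf hBne hBbd
  rw [← ht₀def] at hu_tendsto
  have hu_in : Filter.Tendsto u Filter.atTop (nhdsWithin t₀ (Set.Ici 1)) := by
    rw [tendsto_nhdsWithin_iff]
    exact ⟨hu_tendsto, Filter.Eventually.of_forall fun n => (hu_mem n).1⟩
  have h1 : Filter.Tendsto (fun n => φ (u n)) Filter.atTop (nhds (φ t₀)) :=
    (hφc.continuousWithinAt ht₀1).tendsto.comp hu_in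
  have hca : ContinuousAt (fun x : ℝ => C' * x ^ β) t₀ :=
    continuousAt_const.mul (Real.continuousAt_rpow_const t₀ β
      (Or.inl (ne_of_gt (lt_of_lt_of_le one_pos ht₀1))))
  have h2 : Filter.Tendsto (fun n => C' * u n ^ β) Filter.atTop (nhds (C' * t₀ ^ β)) :=
    hca.tendsto.comp hu_tendsto
  have hle : C' * t₀ ^ β ≤ φ t₀ :=
    le_of_tendsto_of_tendsto' h2 h1 fun n => (hu_mem n).2.le
  linarith
end

section
/- Let Λ : (0,∞) → (0,∞) be continuous and nonincreasing with ∫₀^1 dη/(η Λ(η)) < ∞, and let G(x) = ∫₀^x dη/(η Λ(η)), an increasing continuous bijection from (0,∞) onto (0,∞), with inverse γ : (0,∞) → (0,∞) (so that t = ∫₀^{γ(t)} dη/(η Λ(η))). Let F : (0,∞) → (0,∞) be nondecreasing, let A ∈ [0,1), and let I : (0,∞) → (0,∞) be differentiable with I′(t) ≤ −(1−A) · I(t) · Λ(4 F(t)²/I(t)) for all t > 0. Then I(2t) ≤ 4 F(t)² / γ((1−A)t) for all t > 0. -/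
open MeasureTheory

/-- ODE lemma of Theorem 5.1: with `γ` the inverse of `x ↦ ∫₀^x dη/(η Λ(η))`
(`Λ` continuous, positive, nonincreasing on `(0,∞)` and `1/(ηΛ(η))` integrable
near `0`), `F` nondecreasing and positive, `0 ≤ A < 1`, any positive
differentiable `I` with `I'(t) ≤ -(1-A) I(t) Λ(4F(t)²/I(t))` satisfies
`I(2t) ≤ 4F(t)²/γ((1-A)t)` for all `t > 0`. -/
theorem faber_krahn_ode_lemma (Λ : ℝ → ℝ)
    (hΛcont : ContinuousOn Λ (Set.Ioi 0))
    (hΛpos : ∀ x : ℝ, 0 < x → 0 < Λ x)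
    (hΛanti : ∀ x y : ℝ, 0 < x → x ≤ y → Λ y ≤ Λ x)
    (hΛint : IntegrableOn (fun η => 1 / (η * Λ η)) (Set.Ioc 0 1))
    (γ : ℝ → ℝ)
    (hγpos : ∀ t : ℝ, 0 < t → 0 < γ t)
    (hγ : ∀ t : ℝ, 0 < t → (∫ η in Set.Ioc 0 (γ t), 1 / (η * Λ η)) = t)
    (F : ℝ → ℝ)
    (hFpos : ∀ t : ℝ, 0 < t → 0 < F t)
    (hFmono : ∀ s t : ℝ, 0 < s → s ≤ t → F s ≤ F t)
    (A : ℝ) (hA0 : 0 ≤ A) (hA1 : A < 1)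
    (I I' : ℝ → ℝ)
    (hIpos : ∀ t : ℝ, 0 < t → 0 < I t)
    (hI : ∀ t : ℝ, 0 < t → HasDerivAt I (I' t) t)
    (hineq : ∀ t : ℝ, 0 < t → I' t ≤ -(1 - A) * I t * Λ (4 * F t ^ 2 / I t)) :
    ∀ t : ℝ, 0 < t → I (2 * t) ≤ 4 * F t ^ 2 / γ ((1 - A) * t) := by
  have h1A : (0:ℝ) < 1 - A := by linarith
  set f : ℝ → ℝ := fun η => 1 / (η * Λ η) with hfdef
  set G : ℝ → ℝ := fun x => ∫ η in Set.Ioc 0 x, f η with hGdef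
  -- continuity of f on (0,∞)
  have hmulcont : ContinuousOn (fun η : ℝ => η * Λ η) (Set.Ioi 0) :=
    continuousOn_id.mul hΛcont
  have hmulne : ∀ η ∈ Set.Ioi (0:ℝ), η * Λ η ≠ 0 := fun η hη =>
    ne_of_gt (mul_pos hη (hΛpos η hη))
  have hfc : ContinuousOn f (Set.Ioi 0) := continuousOn_const.div hmulcont hmulne
  -- integrability of f on Ioc 0 M
  have hInt : ∀ M : ℝ, 0 < M → IntegrableOn f (Set.Ioc 0 M) := by
    intro M hM
    rcases le_or_gt M 1 with h | h
    · exact hΛint.mono_set (Set.Ioc_subset_Ioc_right h)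
    · have hu : Set.Ioc (0:ℝ) M = Set.Ioc 0 1 ∪ Set.Ioc 1 M :=
        (Set.Ioc_union_Ioc_eq_Ioc zero_le_one h.le).symm
      rw [hu]
      refine hΛint.union ?_
      have hsub : Set.Icc (1:ℝ) M ⊆ Set.Ioi 0 := fun x hx => lt_of_lt_of_le one_pos hx.1
      exact ((hfc.mono hsub).integrableOn_Icc).mono_set Set.Ioc_subset_Icc_self
  -- G is nonnegative
  have hGnonneg : ∀ x : ℝ, 0 ≤ G x := by
    intro x
    refine setIntegral_nonneg measurableSet_Ioc (fun η hη => ?_)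
    have h1 : 0 < η := hη.1
    have := hΛpos η h1
    positivity
  -- splitting lemma
  have hsplit : ∀ x y : ℝ, 0 < x → x ≤ y → G y = G x + ∫ η in Set.Ioc x y, f η := by
    intro x y hx hxy
    have hdisj : Disjoint (Set.Ioc (0:ℝ) x) (Set.Ioc x y) := by
      apply Set.disjoint_left.mpr
      intro a ha ha'
      exact absurd ha.2 (not_le.mpr ha'.1)
    have hun : Set.Ioc (0:ℝ) x ∪ Set.Ioc x y = Set.Ioc 0 y :=
      Set.Ioc_union_Ioc_eq_Ioc hx.le hxy
    have hi1 : IntegrableOn f (Set.Ioc 0 x) := hInt x hx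
    have hi2 : IntegrableOn f (Set.Ioc x y) :=
      (hInt y (lt_of_lt_of_le hx hxy)).mono_set (Set.Ioc_subset_Ioc_left hx.le)
    have := setIntegral_union hdisj measurableSet_Ioc hi1 hi2 (f := f) (μ := volume)
    rw [hGdef]
    simp only
    rw [← hun, this]
  -- strict monotonicity of G
  have hGlt : ∀ x y : ℝ, 0 < x → x < y → G x < G y := by
    intro x y hx hxy
    rw [hsplit x y hx hxy.le]
    have hc : (0:ℝ) < 1 / (y * Λ x) := by
      have := hΛpos x hx
      have hy : (0:ℝ) < y := hx.trans hxy
      positivity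
    have hlow : ∀ η ∈ Set.Ioc x y, 1 / (y * Λ x) ≤ f η := by
      intro η hη
      have hη0 : 0 < η := hx.trans hη.1
      have hΛη : 0 < Λ η := hΛpos η hη0
      have h1 : η * Λ η ≤ y * Λ x :=
        mul_le_mul hη.2 (hΛanti x η hx hη.1.le) hΛη.le (by linarith [hx.trans hxy])
      exact one_div_le_one_div_of_le (mul_pos hη0 hΛη) h1
    have hi2 : IntegrableOn f (Set.Ioc x y) :=
      (hInt y (hx.trans hxy)).mono_set (Set.Ioc_subset_Ioc_left hx.le)
    have hkey := setIntegral_ge_of_const_le_real (measurableSet_Ioc)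
      (by rw [Real.volume_Ioc]; exact ENNReal.ofReal_ne_top) hlow hi2
    rw [Real.volume_real_Ioc_of_le (by linarith)] at hkey
    nlinarith
  -- derivative of G
  have hGderiv : ∀ x : ℝ, 0 < x → HasDerivAt G (f x) x := by
    intro x hx
    have hc : (0:ℝ) < x / 2 := by linarith
    have key : ∀ z : ℝ, x / 2 ≤ z → G z = G (x / 2) + ∫ η in (x/2)..z, f η := by
      intro z hz
      rw [intervalIntegral.integral_of_le hz]
      exact hsplit (x/2) z hc hz
    have hii : IntervalIntegrable f volume (x/2) x := by
      apply ContinuousOn.intervalIntegrable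
      apply hfc.mono
      intro a ha
      rw [Set.uIcc_of_le (by linarith)] at ha
      exact lt_of_lt_of_le hc ha.1
    have hmeas : StronglyMeasurableAtFilter f (nhds x) volume :=
      ContinuousOn.stronglyMeasurableAtFilter isOpen_Ioi hfc x hx
    have hcont : ContinuousAt f x := hfc.continuousAt (isOpen_Ioi.mem_nhds hx)
    have hder := (intervalIntegral.integral_hasDerivAt_right hii hmeas hcont).const_add (G (x/2))
    apply hder.congr_of_eventuallyEq
    filter_upwards [Ioi_mem_nhds (show x/2 < x by linarith)] with z hz
    exact key z (le_of_lt hz)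
  -- I' is nonpositive, hence I is antitone
  have hI'neg : ∀ l : ℝ, 0 < l → I' l ≤ 0 := by
    intro l hl
    have harg : 0 < 4 * F l ^ 2 / I l := by
      have := hFpos l hl; have := hIpos l hl; positivity
    have hΛ := hΛpos _ harg
    have hIl := hIpos l hl
    have := hineq l hl
    nlinarith [mul_pos (mul_pos h1A hIl) hΛ]
  have hIanti : ∀ s u : ℝ, 0 < s → s ≤ u → I u ≤ I s := by
    intro s u hs hsu
    have hanti : AntitoneOn I (Set.Ioi 0) := by
      apply antitoneOn_of_deriv_nonpos (convex_Ioi 0)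
      · intro x hx
        exact (hI x hx).continuousAt.continuousWithinAt
      · intro x hx
        rw [interior_Ioi] at hx
        exact (hI x hx).differentiableAt.differentiableWithinAt
      · intro x hx
        rw [interior_Ioi] at hx
        rw [(hI x hx).deriv]
        exact hI'neg x hx
    exact hanti hs (lt_of_lt_of_le hs hsu) hsu
  -- main argument
  intro t ht
  set y : ℝ → ℝ := fun l => 4 * F t ^ 2 / I l with hydef
  set J : ℝ → ℝ := fun l => G (y l) with hJdef
  have hFt := hFpos t ht
  have hypos : ∀ l : ℝ, 0 < l → 0 < y l := by
    intro l hl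
    have := hIpos l hl
    simp only [hydef]
    positivity
  -- derivative bound for J on (0, t]
  have hJder : ∀ l : ℝ, 0 < l → l ≤ t →
      ∃ D : ℝ, HasDerivAt J D l ∧ 1 - A ≤ D := by
    intro l hl hlt
    have hIl := hIpos l hl
    have hyl := hypos l hl
    have hΛyl := hΛpos _ hyl
    have hyd : HasDerivAt y ((0 * I l - 4 * F t ^ 2 * I' l) / I l ^ 2) l :=
      (hasDerivAt_const l (4 * F t ^ 2)).div (hI l hl) (ne_of_gt hIl)
    have hGd := hGderiv (y l) hyl
    have hJd : HasDerivAt J (f (y l) * ((0 * I l - 4 * F t ^ 2 * I' l) / I l ^ 2)) l :=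
      hGd.comp l hyd
    refine ⟨_, hJd, ?_⟩
    -- value of derivative
    have hval : f (y l) * ((0 * I l - 4 * F t ^ 2 * I' l) / I l ^ 2)
        = (-I' l) / (I l * Λ (y l)) := by
      simp only [hfdef, hydef]
      have hF4 : (4:ℝ) * F t ^ 2 ≠ 0 := by positivity
      field_simp
      ring
    rw [hval]
    -- inequality
    have harg : 4 * F l ^ 2 / I l ≤ y l := by
      have hFl := hFpos l hl
      have hFle : F l ≤ F t := hFmono l t hl hlt
      simp only [hydef]
      gcongr
    have hargpos : 0 < 4 * F l ^ 2 / I l := by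
      have := hFpos l hl; positivity
    have hΛle : Λ (y l) ≤ Λ (4 * F l ^ 2 / I l) := hΛanti _ _ hargpos harg
    have h1 : I' l ≤ -(1 - A) * I l * Λ (y l) := by
      have := hineq l hl
      nlinarith [mul_le_mul_of_nonneg_left hΛle (mul_nonneg h1A.le hIl.le)]
    rw [le_div_iff₀ (mul_pos hIl hΛyl)]
    nlinarith
  -- J l - (1-A) l is monotone on [a, t] for 0 < a < t
  have hJmono : ∀ a : ℝ, 0 < a → a < t → (1 - A) * (t - a) ≤ J t := by
    intro a ha hat
    have hmono : MonotoneOn (fun l => J l - (1 - A) * l) (Set.Icc a t) := by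
      apply monotoneOn_of_deriv_nonneg (convex_Icc a t)
      · intro x hx
        obtain ⟨D, hD, _⟩ := hJder x (lt_of_lt_of_le ha hx.1) hx.2
        exact ((hD.sub ((hasDerivAt_id x).const_mul (1 - A))).continuousAt).continuousWithinAt
      · intro x hx
        rw [interior_Icc] at hx
        obtain ⟨D, hD, _⟩ := hJder x (lt_of_lt_of_le ha hx.1.le) hx.2.le
        exact ((hD.sub ((hasDerivAt_id x).const_mul (1 - A))).differentiableAt).differentiableWithinAt
      · intro x hx
        rw [interior_Icc] at hx
        obtain ⟨D, hD, hDge⟩ := hJder x (lt_of_lt_of_le ha hx.1.le) hx.2.le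
        have hD' : HasDerivAt (fun l => J l - (1 - A) * l) (D - (1 - A) * 1) x :=
          hD.sub ((hasDerivAt_id x).const_mul (1 - A))
        rw [hD'.deriv]
        linarith
    have := hmono (Set.left_mem_Icc.mpr hat.le) (Set.right_mem_Icc.mpr hat.le) hat.le
    have hJa : 0 ≤ J a := hGnonneg (y a)
    simp only at this
    linarith
  -- limit a → 0 : (1-A) t ≤ J t
  have hJt : (1 - A) * t ≤ J t := by
    by_contra hcon
    push_neg at hcon
    have hJtn : 0 ≤ J t := hGnonneg (y t)
    have hne : (1 - A) ≠ 0 := ne_of_gt h1A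
    have hfrac : J t / (1 - A) < t := by
      rw [div_lt_iff₀ h1A]
      nlinarith
    have hfracnn : 0 ≤ J t / (1 - A) := div_nonneg hJtn h1A.le
    obtain ⟨a₀, ha₀def⟩ : ∃ a₀ : ℝ, a₀ = t - J t / (1 - A) := ⟨_, rfl⟩
    have ha₀pos : 0 < a₀ := by rw [ha₀def]; linarith
    have ha₀le : a₀ ≤ t := by rw [ha₀def]; linarith
    have hkey := hJmono (a₀ / 2) (by linarith) (by linarith)
    have heq : (1 - A) * (t - a₀) = J t := by
      rw [ha₀def]
      field_simp
      ring
    nlinarith [mul_pos h1A ha₀pos]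
  -- conclude: γ ((1-A) t) ≤ y t
  have hs : 0 < (1 - A) * t := mul_pos h1A ht
  have hγs := hγpos _ hs
  have hGγ : G (γ ((1 - A) * t)) = (1 - A) * t := hγ _ hs
  have hyt : γ ((1 - A) * t) ≤ y t := by
    by_contra hcon
    push_neg at hcon
    have := hGlt _ _ (hypos t ht) hcon
    rw [hGγ] at this
    simp only [hJdef] at hJt
    linarith
  have hIt : I t ≤ 4 * F t ^ 2 / γ ((1 - A) * t) := by
    have hytle : γ ((1 - A) * t) * I t ≤ 4 * F t ^ 2 := by
      have h := (le_div_iff₀ (hIpos t ht)).mp hyt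
      linarith
    rw [le_div_iff₀ hγs]
    nlinarith
  have h2t : I (2 * t) ≤ I t := hIanti t (2 * t) ht (by linarith)
  linarith
end
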